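/- With independent inputs X_1,...,X_M and output Y on finite alphabets, define the rate point r by r_i = I(X_i; Y | X_{i+1},...,X_M) for i < M and r_M = I(X_M; Y). Then for every k ∈ [M], ∑_{j=1}^k r_j = I(X_1,...,X_k; Y | X_{k+1},...,X_M). Consequently r lies in the fundamental region R = {r ≥ 0 : ∑_{i∈S} r_i ≤ I(X_S; Y | X_{S^c}) ∀S ⊆ [M]} and achieves equality for every initial segment S = {1,...,k}. -/

import Mathlib

open Finset

/-- Marginal joint pmf of `(X_S, Y)` obtained from the joint pmf `p` of
`(X_1,…,X_M, Y)` by summing out inputs outside `S`; evaluated at the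
values that `x` takes on `S` and at `y`. -/
noncomputable def margXY {M : ℕ} {α : Fin M → Type*} [∀ i, Fintype (α i)]
    [∀ i, DecidableEq (α i)] {β : Type*} [Fintype β]
    (p : (∀ i, α i) → β → ℝ) (S : Finset (Fin M)) (x : ∀ i, α i) (y : β) : ℝ :=
  ∑ x' : ∀ i, α i, if ∀ i ∈ S, x' i = x i then p x' y else 0

/-- Marginal pmf of `X_S`. -/
noncomputable def margX {M : ℕ} {α : Fin M → Type*} [∀ i, Fintype (α i)]
    [∀ i, DecidableEq (α i)] {β : Type*} [Fintype β]
    (p : (∀ i, α i) → β → ℝ) (S : Finset (Fin M)) (x : ∀ i, α i) : ℝ :=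
  ∑ y : β, margXY p S x y

/-- Conditional mutual information `I(X_S; Y | X_A)`, via the standard
sum formula. -/
noncomputable def condMI {M : ℕ} {α : Fin M → Type*} [∀ i, Fintype (α i)]
    [∀ i, DecidableEq (α i)] {β : Type*} [Fintype β]
    (p : (∀ i, α i) → β → ℝ) (S A : Finset (Fin M)) : ℝ :=
  ∑ x : ∀ i, α i, ∑ y : β,
    p x y * Real.log ((margXY p (S ∪ A) x y * margX p A x) /
      (margX p (S ∪ A) x * margXY p A x y))

/-- `p` is a probability mass function. -/
def IsProb {M : ℕ} {α : Fin M → Type*} [∀ i, Fintype (α i)]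
    [∀ i, DecidableEq (α i)] {β : Type*} [Fintype β]
    (p : (∀ i, α i) → β → ℝ) : Prop :=
  (∀ x y, 0 ≤ p x y) ∧ ∑ x : ∀ i, α i, ∑ y : β, p x y = 1

/-- The inputs `X_1, …, X_M` are mutually independent. -/
def IndepInputs {M : ℕ} {α : Fin M → Type*} [∀ i, Fintype (α i)]
    [∀ i, DecidableEq (α i)] {β : Type*} [Fintype β]
    (p : (∀ i, α i) → β → ℝ) : Prop :=
  ∀ x : ∀ i, α i, margX p Finset.univ x = ∏ i : Fin M, margX p {i} x

/-- Membership in the fundamental region `R`. -/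
def memR {M : ℕ} {α : Fin M → Type*} [∀ i, Fintype (α i)]
    [∀ i, DecidableEq (α i)] {β : Type*} [Fintype β]
    (p : (∀ i, α i) → β → ℝ) (r : Fin M → ℝ) : Prop :=
  (∀ i, 0 ≤ r i) ∧ ∀ S : Finset (Fin M), ∑ i ∈ S, r i ≤ condMI p S Sᶜ

/-- Membership in the front facet `F_S`. -/
def memF {M : ℕ} {α : Fin M → Type*} [∀ i, Fintype (α i)]
    [∀ i, DecidableEq (α i)] {β : Type*} [Fintype β]
    (p : (∀ i, α i) → β → ℝ) (S : Finset (Fin M)) (r : Fin M → ℝ) : Prop :=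
  memR p r ∧ ∑ i ∈ S, r i = condMI p S Sᶜ

/-- Membership in the back face `B_A`. -/
def memB {M : ℕ} {α : Fin M → Type*} [∀ i, Fintype (α i)]
    [∀ i, DecidableEq (α i)] {β : Type*} [Fintype β]
    (p : (∀ i, α i) → β → ℝ) (A : Finset (Fin M)) (r : Fin M → ℝ) : Prop :=
  memR p r ∧ ∀ i ∈ A, r i = 0

/-!
Random variables are modelled as views `f : Ω → V` of the outcome `ω = (x, y)`, with entropy
`H(f) = -∑ P ω log P(f = f ω)`, so that
`I(X_S; Y | X_A) = H(X_{S∪A}) + H(X_A, Y) - H(X_{S∪A}, Y) - H(X_A)`.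
The chain rule writes `I(X_S; Y | X_A)` as the sum over `j ∈ S` of `I(X_j; Y | X_{S,>j}, X_A)`;
for `S = {1,…,k}`, `A = {k+1,…,M}` this is the claimed identity. For arbitrary `S` and `A = Sᶜ`
the `j`-th term conditions on a superset of `{j+1,…,M}` not containing `j`, and for independent
inputs `I(X_j; Y | X_C) = H(X_j) + H(X_C, Y) - H(X_{C ∪ {j}}, Y)` is monotone in `C` by
submodularity of entropy. Submodularity, like nonnegativity of `I`, is Gibbs' inequality applied
to the ratio `P(f₁) P(f₂) / (P(f₁, f₂) P(g ∘ f₁))` for a common coarsening `g ∘ f₁ = g' ∘ f₂`.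
-/

section FiniteEntropy

variable {Ω V V₁ V₂ W : Type*} [Fintype Ω] [DecidableEq V] {P : Ω → ℝ}

variable (P) in
noncomputable def pushMass (f : Ω → V) (v : V) : ℝ := ∑ ω with f ω = v, P ω

variable (P) in
noncomputable def entropy (f : Ω → V) : ℝ := -∑ ω, P ω * Real.log (pushMass P f (f ω))

lemma pushMass_nonneg (hP : 0 ≤ P) (f : Ω → V) (v : V) : 0 ≤ pushMass P f v :=
  sum_nonneg fun ω _ => hP ω

lemma le_pushMass (hP : 0 ≤ P) (f : Ω → V) (ω : Ω) : P ω ≤ pushMass P f (f ω) :=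
  single_le_sum (fun ω' _ => hP ω') (mem_filter.2 ⟨mem_univ ω, rfl⟩)

lemma sum_mul_comp_eq_sum_pushMass_mul [Fintype V] (f : Ω → V) (G : V → ℝ) :
    ∑ ω, P ω * G (f ω) = ∑ v, pushMass P f v * G v := by
  simp_rw [pushMass, sum_mul]
  rw [← sum_fiberwise univ f]
  exact sum_congr rfl fun v _ => sum_congr rfl fun ω hω => by rw [(mem_filter.1 hω).2]

lemma sum_pushMass [Fintype V] (f : Ω → V) : ∑ v, pushMass P f v = ∑ ω, P ω :=
  sum_fiberwise univ f P

lemma sum_pushMass_fiber [Fintype V] [DecidableEq W] (f : Ω → V) (g : V → W) (w : W) :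
    ∑ v with g v = w, pushMass P f v = pushMass P (fun ω => g (f ω)) w := by
  unfold pushMass
  rw [← sum_fiberwise_of_maps_to (g := f) (t := {v | g v = w}) fun ω hω => by simpa using hω]
  refine sum_congr rfl fun v hv => ?_
  rw [filter_filter]
  exact sum_congr (filter_congr fun ω _ => by grind) fun _ _ => rfl

lemma entropy_congr [DecidableEq W] {f : Ω → V} {f' : Ω → W}
    (h : ∀ ω ω', f ω = f ω' ↔ f' ω = f' ω') : entropy P f = entropy P f' := by
  unfold entropy pushMass
  congr 1
  refine sum_congr rfl fun ω _ => ?_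
  congr 2
  exact sum_congr (filter_congr fun ω' _ => h ω' ω) fun _ _ => rfl

lemma sum_mul_log_nonpos (hP : 0 ≤ P) (z : Ω → ℝ) (hz : ∀ ω, 0 < P ω → 0 < z ω)
    (hPz : ∑ ω, P ω * z ω ≤ ∑ ω, P ω) : ∑ ω, P ω * Real.log (z ω) ≤ 0 := by
  have key : ∀ ω, P ω * Real.log (z ω) ≤ P ω * z ω - P ω := by
    intro ω
    rcases (hP ω).eq_or_lt with h | h
    · simp [← h]
    · nlinarith [mul_le_mul_of_nonneg_left (Real.log_le_sub_one_of_pos (hz ω h)) h.le]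
  calc ∑ ω, P ω * Real.log (z ω) ≤ ∑ ω, (P ω * z ω - P ω) := sum_le_sum fun ω _ => key ω
    _ ≤ 0 := by rw [sum_sub_distrib]; linarith

section Submodularity

variable [Fintype V₁] [Fintype V₂] [DecidableEq V₁] [DecidableEq V₂] [DecidableEq W]
  (f₁ : Ω → V₁) (f₂ : Ω → V₂) (g₁ : V₁ → W) {g₂ : V₂ → W}

lemma sum_mul_pushMass_ratio_le (hP : 0 ≤ P) (hg : ∀ ω, g₁ (f₁ ω) = g₂ (f₂ ω)) :
    ∑ ω, P ω * (pushMass P f₁ (f₁ ω) * pushMass P f₂ (f₂ ω) /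
      (pushMass P (fun ω => (f₁ ω, f₂ ω)) (f₁ ω, f₂ ω) *
        pushMass P (fun ω => g₁ (f₁ ω)) (g₁ (f₁ ω)))) ≤ ∑ ω, P ω := by
  set q₁ := pushMass P f₁
  set q₂ := pushMass P f₂
  set q₁₂ := pushMass P (fun ω => (f₁ ω, f₂ ω))
  set q := pushMass P (fun ω => g₁ (f₁ ω))
  have hterm : ∀ v : V₁ × V₂, q₁₂ v * (q₁ v.1 * q₂ v.2 / (q₁₂ v * q (g₁ v.1))) ≤
      if g₂ v.2 = g₁ v.1 then q₁ v.1 / q (g₁ v.1) * q₂ v.2 else 0 := by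
    intro v
    by_cases h0 : q₁₂ v = 0
    · rw [h0, zero_mul]
      split_ifs
      · exact mul_nonneg (div_nonneg (pushMass_nonneg hP _ _) (pushMass_nonneg hP _ _))
          (pushMass_nonneg hP _ _)
      · exact le_rfl
    obtain ⟨ω, hω, -⟩ := exists_ne_zero_of_sum_ne_zero h0
    obtain rfl : (f₁ ω, f₂ ω) = v := (mem_filter.1 hω).2
    rw [if_pos (hg ω).symm]
    exact le_of_eq (by field_simp)
  calc _ = ∑ v, q₁₂ v * (q₁ v.1 * q₂ v.2 / (q₁₂ v * q (g₁ v.1))) :=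
        sum_mul_comp_eq_sum_pushMass_mul (fun ω => (f₁ ω, f₂ ω))
          fun v => q₁ v.1 * q₂ v.2 / (q₁₂ v * q (g₁ v.1))
    _ ≤ ∑ v : V₁ × V₂, if g₂ v.2 = g₁ v.1 then q₁ v.1 / q (g₁ v.1) * q₂ v.2 else 0 :=
        sum_le_sum fun v _ => hterm v
    _ = ∑ v₁, q₁ v₁ / q (g₁ v₁) * q (g₁ v₁) := by
        rw [Fintype.sum_prod_type]
        refine sum_congr rfl fun v₁ _ => ?_
        rw [← sum_filter]
        simp only
        rw [← mul_sum, sum_pushMass_fiber]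
        simp only [← hg]
        rfl
    _ ≤ ∑ v₁, q₁ v₁ := sum_le_sum fun v₁ _ => by
        rcases eq_or_ne (q (g₁ v₁)) 0 with h | h
        · simpa [h] using pushMass_nonneg hP _ _
        · rw [div_mul_cancel₀ _ h]
    _ = ∑ ω, P ω := sum_pushMass f₁

theorem entropy_pair_add_entropy_le (hP : 0 ≤ P) (hg : ∀ ω, g₁ (f₁ ω) = g₂ (f₂ ω)) :
    entropy P (fun ω => (f₁ ω, f₂ ω)) + entropy P (fun ω => g₁ (f₁ ω)) ≤
      entropy P f₁ + entropy P f₂ := by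
  set z : Ω → ℝ := fun ω => pushMass P f₁ (f₁ ω) * pushMass P f₂ (f₂ ω) /
    (pushMass P (fun ω => (f₁ ω, f₂ ω)) (f₁ ω, f₂ ω) *
      pushMass P (fun ω => g₁ (f₁ ω)) (g₁ (f₁ ω)))
  have hpos : ∀ ω, 0 < P ω → 0 < pushMass P f₁ (f₁ ω) ∧ 0 < pushMass P f₂ (f₂ ω) ∧
      0 < pushMass P (fun ω => (f₁ ω, f₂ ω)) (f₁ ω, f₂ ω) ∧
      0 < pushMass P (fun ω => g₁ (f₁ ω)) (g₁ (f₁ ω)) := fun ω h =>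
    ⟨h.trans_le (le_pushMass hP _ ω), h.trans_le (le_pushMass hP _ ω),
      h.trans_le (le_pushMass hP (fun ω => (f₁ ω, f₂ ω)) ω),
      h.trans_le (le_pushMass hP (fun ω => g₁ (f₁ ω)) ω)⟩
  have hlog : ∑ ω, P ω * Real.log (z ω) = entropy P (fun ω => (f₁ ω, f₂ ω)) +
      entropy P (fun ω => g₁ (f₁ ω)) - entropy P f₁ - entropy P f₂ := by
    simp only [entropy, ← sum_sub_distrib, ← sum_add_distrib, ← sum_neg_distrib]
    refine sum_congr rfl fun ω _ => ?_
    rcases (hP ω).eq_or_lt with h | h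
    · simp [← h]
    obtain ⟨h₁, h₂, h₁₂, h⟩ := hpos ω h
    rw [Real.log_div (by positivity) (by positivity), Real.log_mul h₁.ne' h₂.ne',
      Real.log_mul h₁₂.ne' h.ne']
    ring
  have := sum_mul_log_nonpos hP z (fun ω h => by
    obtain ⟨h₁, h₂, h₁₂, h⟩ := hpos ω h
    positivity) (sum_mul_pushMass_ratio_le f₁ f₂ g₁ hP hg)
  linarith

end Submodularity

end FiniteEntropy

lemma Finset.restrict_eq_restrict_iff {ι : Type*} {π : ι → Type*} {s : Finset ι}
    {x x' : ∀ i, π i} : s.restrict x = s.restrict x' ↔ ∀ i ∈ s, x i = x' i := by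
  simp [funext_iff]

section Channel

variable {M : ℕ} {α : Fin M → Type*} [∀ i, Fintype (α i)] [∀ i, DecidableEq (α i)]
  {β : Type*} [Fintype β] (p : (∀ i, α i) → β → ℝ)

lemma margXY_eq_pushMass [DecidableEq β] (U : Finset (Fin M)) (x : ∀ i, α i) (y : β) :
    margXY p U x y =
      pushMass (Function.uncurry p) (fun ω => (U.restrict ω.1, ω.2)) (U.restrict x, y) := by
  simp only [margXY, pushMass, sum_filter, Fintype.sum_prod_type, Prod.ext_iff,
    restrict_eq_restrict_iff, and_comm (b := _ = y), ite_and, sum_ite_eq', mem_univ, if_true,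
    Function.uncurry_apply_pair]

lemma margX_eq_pushMass (U : Finset (Fin M)) (x : ∀ i, α i) :
    margX p U x = pushMass (Function.uncurry p) (fun ω => U.restrict ω.1) (U.restrict x) := by
  simp only [margX, margXY, pushMass, sum_filter, Fintype.sum_prod_type,
    restrict_eq_restrict_iff]
  exact sum_comm

noncomputable def inputEntropy (U : Finset (Fin M)) : ℝ :=
  entropy (Function.uncurry p) (fun ω => U.restrict ω.1)

noncomputable def jointEntropy [DecidableEq β] (U : Finset (Fin M)) : ℝ :=
  entropy (Function.uncurry p) (fun ω => (U.restrict ω.1, ω.2))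

lemma inputEntropy_eq (U : Finset (Fin M)) :
    inputEntropy p U = -∑ x, ∑ y, p x y * Real.log (margX p U x) := by
  simp [inputEntropy, entropy, margX_eq_pushMass, Fintype.sum_prod_type]

lemma jointEntropy_eq [DecidableEq β] (U : Finset (Fin M)) :
    jointEntropy p U = -∑ x, ∑ y, p x y * Real.log (margXY p U x y) := by
  simp [jointEntropy, entropy, margXY_eq_pushMass, Fintype.sum_prod_type]

variable {p}

lemma le_margXY (hp : ∀ x y, 0 ≤ p x y) (U : Finset (Fin M)) (x : ∀ i, α i) (y : β) :
    p x y ≤ margXY p U x y := by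
  classical
  rw [margXY_eq_pushMass]
  exact le_pushMass (P := Function.uncurry p) (fun ω => hp ω.1 ω.2) _ (x, y)

lemma le_margX (hp : ∀ x y, 0 ≤ p x y) (U : Finset (Fin M)) (x : ∀ i, α i) (y : β) :
    p x y ≤ margX p U x := by
  rw [margX_eq_pushMass]
  exact le_pushMass (P := Function.uncurry p) (fun ω => hp ω.1 ω.2) _ (x, y)

lemma condMI_eq_entropy [DecidableEq β] (hp : ∀ x y, 0 ≤ p x y) (S A : Finset (Fin M)) :
    condMI p S A = inputEntropy p (S ∪ A) + jointEntropy p A - jointEntropy p (S ∪ A) -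
      inputEntropy p A := by
  simp only [condMI, inputEntropy_eq, jointEntropy_eq, ← sum_add_distrib, ← sum_sub_distrib,
    ← sum_neg_distrib]
  refine sum_congr rfl fun x _ => sum_congr rfl fun y _ => ?_
  rcases (hp x y).eq_or_lt with h | h
  · simp [← h]
  have h₁ := h.trans_le (le_margXY hp (S ∪ A) x y)
  have h₂ := h.trans_le (le_margX hp A x y)
  have h₃ := h.trans_le (le_margX hp (S ∪ A) x y)
  have h₄ := h.trans_le (le_margXY hp A x y)
  rw [Real.log_div (by positivity) (by positivity), Real.log_mul h₁.ne' h₂.ne',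
    Real.log_mul h₃.ne' h₄.ne']
  ring

theorem condMI_nonneg (hp : ∀ x y, 0 ≤ p x y) (S A : Finset (Fin M)) : 0 ≤ condMI p S A := by
  classical
  have hpair : entropy (Function.uncurry p)
      (fun ω => ((S ∪ A).restrict ω.1, (A.restrict ω.1, ω.2))) = jointEntropy p (S ∪ A) :=
    entropy_congr fun ω ω' => by simp only [Prod.ext_iff, restrict_eq_restrict_iff]; grind
  have key : jointEntropy p (S ∪ A) + inputEntropy p A ≤
      inputEntropy p (S ∪ A) + jointEntropy p A := by
    rw [← hpair]
    exact entropy_pair_add_entropy_le (P := Function.uncurry p)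
      (fun ω => (S ∪ A).restrict ω.1) (fun ω => (A.restrict ω.1, ω.2))
      (restrict₂ subset_union_right) (fun ω => hp ω.1 ω.2) (g₂ := Prod.fst) fun _ => rfl
  rw [condMI_eq_entropy hp]
  linarith

theorem jointEntropy_union_add_le [DecidableEq β] (hp : ∀ x y, 0 ≤ p x y)
    {B C D : Finset (Fin M)} (hCB : C ⊆ B) (hCD : C ⊆ D) :
    jointEntropy p (B ∪ D) + jointEntropy p C ≤ jointEntropy p B + jointEntropy p D := by
  have key := entropy_pair_add_entropy_le (P := Function.uncurry p)
    (fun ω => (B.restrict ω.1, ω.2)) (fun ω => (D.restrict ω.1, ω.2))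
    (Prod.map (restrict₂ hCB) id) (fun ω => hp ω.1 ω.2) (g₂ := Prod.map (restrict₂ hCD) id)
    fun _ => rfl
  rwa [entropy_congr (f' := fun ω => ((B ∪ D).restrict ω.1, ω.2)) fun ω ω' => by
    simp only [Prod.ext_iff, restrict_eq_restrict_iff]; grind] at key

lemma condMI_empty_left (hp : ∀ x y, 0 ≤ p x y) (A : Finset (Fin M)) : condMI p ∅ A = 0 := by
  classical
  rw [condMI_eq_entropy hp, empty_union]
  ring

lemma condMI_insert (hp : ∀ x y, 0 ≤ p x y) (a : Fin M) (S A : Finset (Fin M)) :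
    condMI p (insert a S) A = condMI p {a} (S ∪ A) + condMI p S A := by
  classical
  simp only [condMI_eq_entropy hp, insert_union, ← insert_eq]
  ring

theorem sum_condMI_singleton (hp : ∀ x y, 0 ≤ p x y) (S A : Finset (Fin M)) :
    ∑ j ∈ S, condMI p {j} ({k ∈ S | j < k} ∪ A) = condMI p S A := by
  induction S using Finset.induction_on_min with
  | empty => rw [sum_empty, condMI_empty_left hp]
  | insert a S ha ih =>
    have haS : a ∉ S := fun h => lt_irrefl a (ha a h)
    rw [sum_insert haS, condMI_insert hp, ← ih, filter_insert, if_neg (lt_irrefl a),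
      filter_true_of_mem ha]
    congr 1
    refine sum_congr rfl fun j hj => ?_
    rw [filter_insert, if_neg (ha j hj).not_gt]

lemma margX_singleton (j : Fin M) (x : ∀ i, α i) :
    margX p {j} x = pushMass (Function.uncurry p) (fun ω => ω.1 j) (x j) := by
  simp only [margX, margXY, pushMass, sum_filter, Fintype.sum_prod_type, mem_singleton,
    forall_eq, Function.uncurry_apply_pair]
  exact sum_comm

lemma margX_eq_sum_piFinset (U : Finset (Fin M)) (x : ∀ i, α i) :
    margX p U x =
      ∑ x' ∈ Fintype.piFinset fun j => if j ∈ U then {x j} else univ, ∑ y, p x' y := by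
  have hU : (Fintype.piFinset fun j => if j ∈ U then {x j} else univ) =
      univ.filter fun x' : ∀ i, α i => ∀ j ∈ U, x' j = x j := by
    ext x'
    simp only [Fintype.mem_piFinset, mem_filter, mem_univ, true_and]
    refine forall_congr' fun j => ?_
    split_ifs with hj <;> simp [hj]
  simp only [hU, sum_filter, margX, margXY, ite_sum_zero]
  exact sum_comm

theorem margX_eq_prod (hp : IsProb p) (hind : IndepInputs p) (U : Finset (Fin M))
    (x : ∀ i, α i) : margX p U x = ∏ j ∈ U, margX p {j} x := by
  set m : ∀ j, α j → ℝ := fun j => pushMass (Function.uncurry p) (fun ω => ω.1 j)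
  have hm : ∀ j, ∑ a, m j a = 1 := fun j => by
    rw [sum_pushMass, Fintype.sum_prod_type, ← hp.2]
    rfl
  have hfactor : ∀ x', ∑ y, p x' y = ∏ j, m j (x' j) := fun x' => by
    have hU := margX_eq_sum_piFinset (p := p) univ x'
    simp only [mem_univ, if_true, Fintype.piFinset_singleton, sum_singleton] at hU
    simp only [← hU, hind x', margX_singleton, m]
  rw [margX_eq_sum_piFinset, sum_congr rfl fun x' _ => hfactor x', ← prod_univ_sum]
  simp only [apply_ite (fun t => ∑ a ∈ t, m _ a), sum_singleton, hm, prod_ite_mem, univ_inter,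
    margX_singleton, m]

lemma inputEntropy_insert (hp : IsProb p) (hind : IndepInputs p) {i : Fin M}
    {U : Finset (Fin M)} (hi : i ∉ U) :
    inputEntropy p (insert i U) = inputEntropy p {i} + inputEntropy p U := by
  simp only [inputEntropy_eq, ← neg_add, ← sum_add_distrib]
  congr 1
  refine sum_congr rfl fun x _ => sum_congr rfl fun y _ => ?_
  rcases (hp.1 x y).eq_or_lt with h | h
  · simp [← h]
  rw [margX_eq_prod hp hind (insert i U), prod_insert hi, ← margX_eq_prod hp hind U,
    Real.log_mul (h.trans_le (le_margX hp.1 {i} x y)).ne' (h.trans_le (le_margX hp.1 U x y)).ne',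
    mul_add]

theorem condMI_singleton_mono (hp : IsProb p) (hind : IndepInputs p) {i : Fin M}
    {B C : Finset (Fin M)} (hCB : C ⊆ B) (hi : i ∉ B) :
    condMI p {i} C ≤ condMI p {i} B := by
  classical
  have hsub := jointEntropy_union_add_le hp.1 hCB (subset_insert i C)
  rw [union_insert, union_eq_left.2 hCB] at hsub
  simp only [condMI_eq_entropy hp.1, ← insert_eq, inputEntropy_insert hp hind hi,
    inputEntropy_insert hp hind fun h => hi (hCB h)]
  linarith

end Channel

/-- The successive-decoding rate point `r_i = I(X_i; Y | X_{i+1},…,X_M)`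
satisfies `∑_{j≤k} r_j = I(X_{1..k}; Y | X_{k+1..M})` for each `k`, is
nonnegative, and lies in the fundamental region `R`. -/
theorem stmt10 {M : ℕ} {α : Fin M → Type*} [∀ i, Fintype (α i)]
    [∀ i, DecidableEq (α i)] {β : Type*} [Fintype β]
    (p : (∀ i, α i) → β → ℝ) (hp : IsProb p) (hind : IndepInputs p) :
    (∀ k : Fin M, ∑ j ∈ Finset.Iic k, condMI p {j} (Finset.Ioi j) =
        condMI p (Finset.Iic k) (Finset.Ioi k)) ∧
    (∀ i : Fin M, 0 ≤ condMI p {i} (Finset.Ioi i)) ∧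
    (∀ S : Finset (Fin M),
        ∑ i ∈ S, condMI p {i} (Finset.Ioi i) ≤ condMI p S Sᶜ) := by
  refine ⟨fun k => ?_, fun i => condMI_nonneg hp.1 _ _, fun S => ?_⟩
  · rw [← sum_condMI_singleton hp.1]
    refine sum_congr rfl fun j hj => ?_
    congr 2
    ext l
    simp only [mem_Iic, mem_Ioi, mem_union, mem_filter] at hj ⊢
    grind
  · rw [← sum_condMI_singleton hp.1 S Sᶜ]
    refine sum_le_sum fun j hj => condMI_singleton_mono hp hind (fun l hl => ?_) (by simp [hj])
    by_cases hlS : l ∈ S <;> simp_all
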